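/- For all natural numbers x and y, the point (x,y) belongs to the discrete Sierpinski triangle S_△ if and only if the binomial coefficient C(x+y, x) is odd. -/

import Mathlib

/-!
By Lucas's theorem at `p = 2`, `C(x + y, x)` is odd exactly when adding `x` and `y` in binary
produces no carry, i.e. when `x &&& y = 0`. On the other side, `S_i` consists of the pairs of
numbers below `2 ^ i` with disjoint binary digits: passing from `S_i` to `S_{i+1}` sets bit `i`
in at most one of the two coordinates.
-/

/-- The `i`-th stage of the discrete Sierpinski triangle:
`S_0 = {(0,0)}`, `S_{i+1} = S_i ∪ (S_i + 2^i·V)` with `V = {(1,0),(0,1)}`. -/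
def sierpStage : ℕ → Set (ℕ × ℕ)
  | 0 => {(0, 0)}
  | i + 1 => sierpStage i ∪
      {p | ∃ m ∈ sierpStage i, ∃ n ∈ ({(1, 0), (0, 1)} : Set (ℕ × ℕ)), p = m + (2 ^ i) • n}

/-- The discrete Sierpinski triangle `S_△ = ⋃ i, S_i`. -/
def sierpinski : Set (ℕ × ℕ) := ⋃ i, sierpStage i

namespace Nat

theorem and_eq_zero_iff_mod_two_div_two {a b : ℕ} :
    a &&& b = 0 ↔ ¬(a % 2 = 1 ∧ b % 2 = 1) ∧ a / 2 &&& b / 2 = 0 := by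
  rw [← and_mod_two_eq_one, ← and_div_two]
  omega

theorem odd_choose_add_iff_mod_two_div_two (x y : ℕ) :
    Odd ((x + y).choose x) ↔ ¬(x % 2 = 1 ∧ y % 2 = 1) ∧ Odd ((x / 2 + y / 2).choose (x / 2)) := by
  have lucas := Choose.choose_modEq_choose_mod_mul_choose_div_nat (p := 2) (n := x + y) (k := x)
  unfold ModEq at lucas
  rw [odd_iff, odd_iff]
  by_cases carry : x % 2 = 1 ∧ y % 2 = 1
  · rw [show (x + y) % 2 = 0 by omega, carry.1, choose_zero_succ] at lucas
    simp [carry, lucas]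
  · have low : ((x + y) % 2).choose (x % 2) = 1 := by
      rcases mod_two_eq_zero_or_one x with hx | hx
      · rw [hx, choose_zero_right]
      · rw [show (x + y) % 2 = x % 2 by omega, choose_self]
    rw [low, one_mul, show (x + y) / 2 = x / 2 + y / 2 by omega] at lucas
    simp [carry, lucas]

theorem odd_choose_add_iff_and_eq_zero (x y : ℕ) :
    Odd ((x + y).choose x) ↔ x &&& y = 0 := by
  induction x using Nat.strong_induction_on generalizing y with
  | _ x ih =>
    rcases eq_zero_or_pos x with rfl | hx
    · simp
    rw [odd_choose_add_iff_mod_two_div_two, ih (x / 2) (by omega)]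
    exact and_eq_zero_iff_mod_two_div_two.symm

theorem two_pow_add_and_of_lt {i b : ℕ} (a : ℕ) (hb : b < 2 ^ i) :
    (2 ^ i + a) &&& b = a &&& b := by
  refine eq_of_testBit_eq fun j => ?_
  rcases lt_or_ge j i with hj | hj
  · simp [testBit_two_pow_add_gt hj]
  · simp [testBit_lt_two_pow (hb.trans_le (Nat.pow_le_pow_right two_pos hj))]

theorem and_two_pow_add_of_lt {i a : ℕ} (b : ℕ) (ha : a < 2 ^ i) :
    a &&& (2 ^ i + b) = a &&& b := by
  rw [Nat.and_comm, two_pow_add_and_of_lt b ha, Nat.and_comm]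

theorem two_pow_add_and_two_pow_add_ne_zero {i a b : ℕ} (ha : a < 2 ^ i) (hb : b < 2 ^ i) :
    (2 ^ i + a) &&& (2 ^ i + b) ≠ 0 := by
  intro h
  simpa [testBit_two_pow_add_eq, testBit_lt_two_pow ha, testBit_lt_two_pow hb]
    using congrArg (testBit · i) h

end Nat

theorem mem_sierpStage_succ {i x y : ℕ} :
    (x, y) ∈ sierpStage (i + 1) ↔ (x, y) ∈ sierpStage i ∨
      (∃ a, x = 2 ^ i + a ∧ (a, y) ∈ sierpStage i) ∨
      (∃ b, y = 2 ^ i + b ∧ (x, b) ∈ sierpStage i) := by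
  simp only [sierpStage, Set.mem_union, Set.mem_ofPred_eq, Set.mem_insert_iff,
    Set.mem_singleton_iff, exists_eq_or_imp, exists_eq_left, Prod.exists]
  refine or_congr_right ⟨?_, ?_⟩
  · rintro ⟨a, b, hab, h | h⟩
    · obtain ⟨rfl, rfl⟩ : x = a + 2 ^ i ∧ y = b := by simpa [Prod.ext_iff] using h
      exact .inl ⟨a, add_comm .., hab⟩
    · obtain ⟨rfl, rfl⟩ : x = a ∧ y = b + 2 ^ i := by simpa [Prod.ext_iff] using h
      exact .inr ⟨b, add_comm .., hab⟩
  · rintro (⟨a, rfl, h⟩ | ⟨b, rfl, h⟩)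
    · exact ⟨a, y, h, .inl (by simp [add_comm])⟩
    · exact ⟨x, b, h, .inr (by simp [add_comm])⟩

theorem mem_sierpStage_iff {i x y : ℕ} :
    (x, y) ∈ sierpStage i ↔ x < 2 ^ i ∧ y < 2 ^ i ∧ x &&& y = 0 := by
  induction i generalizing x y with
  | zero => simp +contextual [sierpStage]
  | succ i ih =>
    have hpow : 2 ^ (i + 1) = 2 ^ i + 2 ^ i := by rw [pow_succ]; omega
    simp only [mem_sierpStage_succ, ih]
    constructor
    · rintro (⟨hx, hy, h⟩ | ⟨a, rfl, ha, hy, h⟩ | ⟨b, rfl, hx, hb, h⟩)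
      · exact ⟨by omega, by omega, h⟩
      · exact ⟨by omega, by omega, by rwa [Nat.two_pow_add_and_of_lt a hy]⟩
      · exact ⟨by omega, by omega, by rwa [Nat.and_two_pow_add_of_lt b hx]⟩
    · rintro ⟨hx, hy, h⟩
      rcases lt_or_ge x (2 ^ i) with hx' | hx' <;> rcases lt_or_ge y (2 ^ i) with hy' | hy'
      · exact .inl ⟨hx', hy', h⟩
      · obtain ⟨b, rfl⟩ := Nat.exists_eq_add_of_le hy'
        rw [Nat.and_two_pow_add_of_lt b hx'] at h
        exact .inr (.inr ⟨b, rfl, hx', by omega, h⟩)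
      · obtain ⟨a, rfl⟩ := Nat.exists_eq_add_of_le hx'
        rw [Nat.two_pow_add_and_of_lt a hy'] at h
        exact .inr (.inl ⟨a, rfl, by omega, hy', h⟩)
      · obtain ⟨a, rfl⟩ := Nat.exists_eq_add_of_le hx'
        obtain ⟨b, rfl⟩ := Nat.exists_eq_add_of_le hy'
        exact absurd h (Nat.two_pow_add_and_two_pow_add_ne_zero (by omega) (by omega))

/-- A point `(x,y)` lies in the discrete Sierpinski triangle iff the binomial
coefficient `C(x+y, x)` is odd. -/
theorem sierpinski_iff_choose_odd (x y : ℕ) :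
    (x, y) ∈ sierpinski ↔ Odd ((x + y).choose x) := by
  simp only [sierpinski, Set.mem_iUnion, mem_sierpStage_iff, Nat.odd_choose_add_iff_and_eq_zero]
  refine ⟨fun ⟨_, _, _, h⟩ => h, fun h => ⟨x + y, ?_, ?_, h⟩⟩ <;>
    exact lt_of_le_of_lt (by omega) Nat.lt_two_pow_self
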